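/- Consider the random coordinate descent iteration x⁺ = x + U_i d_i, where the block index i is chosen uniformly at random from {1,…,N} and d_i minimizes f(x) + ⟨∇_i f(x), s⟩ + (L_i/2)‖s‖² + h_i(x_i + s). Then the conditional expectation satisfies E[F(x⁺) | x] ≤ (1 − 1/N) F(x) + (1/N) ψ_L(d_L(x); x), where ψ_L(s; x) = f(x) + ⟨∇f(x), s⟩ + (1/2)‖s‖_L² + h(x + s) and d_L(x) is its minimizer. -/

import Mathlib

open scoped BigOperators RealInnerProductSpace
open Finset Filter

noncomputable section


/-- The ambient space `ℝ^n` with the Euclidean norm. -/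
abbrev En (n : ℕ) := EuclideanSpace ℝ (Fin n)

/-- Projection onto block `i` of the block decomposition of `ℝ^n` given by the
block-index map `blk : Fin n → Fin N`; it realizes `U_i U_iᵀ y`. -/
def blockProj {n N : ℕ} (blk : Fin n → Fin N) (i : Fin N) (y : En n) : En n :=
  WithLp.toLp 2 (fun j => if blk j = i then y j else 0)

/-- The squared block norm `‖x‖_L² = ∑ i, L i ‖x_i‖²`. -/
def blockNormSq {n N : ℕ} (blk : Fin n → Fin N) (L : Fin N → ℝ) (x : En n) : ℝ :=
  ∑ i, L i * ‖blockProj blk i x‖ ^ 2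

/-!
Compare the `i`-th step with the `i`-th block `(d_L)_i = U_i U_iᵀ d_L` of `d_L`. The block descent
lemma and the minimality of `d_i` give
`F(x + d_i) ≤ f(x) + ⟨∇f(x), (d_L)_i⟩ + (L_i/2)‖(d_L)_i‖² + h(x + (d_L)_i)`.
Summed over `i`, the linear and quadratic terms add up to those of `ψ_L(d_L; x)`, and since
`x + (d_L)_i` differs from `x` only in block `i`, block separability of `h` gives
`∑ i, h(x + (d_L)_i) = (N - 1) h(x) + h(x + d_L)`. Dividing by `N` gives the claim.
-/

section Descent

variable {E : Type*} [NormedAddCommGroup E] [InnerProductSpace ℝ E] [CompleteSpace E]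

theorem le_add_inner_add_sq_of_inner_gradient_sub_le {f : E → ℝ} {g : E → E} {x s : E} {L : ℝ}
    (hg : ∀ t ∈ Set.Icc (0 : ℝ) 1, HasGradientAt f (g (x + t • s)) (x + t • s))
    (hgL : ∀ t ∈ Set.Icc (0 : ℝ) 1, ⟪g (x + t • s) - g x, s⟫ ≤ L * t * ‖s‖ ^ 2) :
    f (x + s) ≤ f x + ⟪g x, s⟫ + L / 2 * ‖s‖ ^ 2 := by
  set φ : ℝ → ℝ := fun t => f (x + t • s) - t * ⟪g x, s⟫ - L / 2 * t ^ 2 * ‖s‖ ^ 2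
  have hφ : ∀ t ∈ Set.Icc (0 : ℝ) 1,
      HasDerivAt φ (⟪g (x + t • s) - g x, s⟫ - L * t * ‖s‖ ^ 2) t := by
    intro t ht
    have hline : HasDerivAt (fun t : ℝ => x + t • s) s t := by
      simpa using ((hasDerivAt_id t).smul_const s).const_add x
    have hf : HasDerivAt (fun t : ℝ => f (x + t • s)) ⟪g (x + t • s), s⟫ t := by
      simpa [Function.comp_def] using (hg t ht).hasFDerivAt.comp_hasDerivAt t hline
    refine ((hf.sub ((hasDerivAt_id t).mul_const ⟪g x, s⟫)).sub
      (((hasDerivAt_pow 2 t).const_mul (L / 2)).mul_const (‖s‖ ^ 2))).congr_deriv ?_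
    rw [inner_sub_left, Nat.add_one_sub_one, pow_one, Nat.cast_ofNat]
    ring
  have hanti : AntitoneOn φ (Set.Icc 0 1) := by
    refine antitoneOn_of_deriv_nonpos (convex_Icc 0 1)
      (fun t ht => (hφ t ht).continuousAt.continuousWithinAt)
      (fun t ht => (hφ t (interior_subset ht)).differentiableAt.differentiableWithinAt)
      fun t ht => ?_
    rw [(hφ t (interior_subset ht)).deriv]
    linarith [hgL t (interior_subset ht)]
  have := hanti (Set.left_mem_Icc.2 zero_le_one) (Set.right_mem_Icc.2 zero_le_one) zero_le_one
  simp only [φ, zero_smul, one_smul, add_zero] at this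
  linarith

end Descent

section Blocks

variable {n N : ℕ} (blk : Fin n → Fin N)

theorem blockProj_apply (i : Fin N) (y : En n) (j : Fin n) :
    blockProj blk i y j = if blk j = i then y j else 0 := rfl

theorem blockProj_apply_of_ne {i : Fin N} (y : En n) {j : Fin n} (hj : blk j ≠ i) :
    blockProj blk i y j = 0 := if_neg hj

theorem blockProj_add (i : Fin N) (y z : En n) :
    blockProj blk i (y + z) = blockProj blk i y + blockProj blk i z := by
  ext j
  simp only [PiLp.add_apply, blockProj_apply]
  split_ifs <;> simp

theorem blockProj_sub (i : Fin N) (y z : En n) :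
    blockProj blk i (y - z) = blockProj blk i y - blockProj blk i z := by
  ext j
  simp only [PiLp.sub_apply, blockProj_apply]
  split_ifs <;> simp

theorem blockProj_blockProj (k i : Fin N) (y : En n) :
    blockProj blk k (blockProj blk i y) = if k = i then blockProj blk i y else 0 := by
  ext j
  by_cases hki : k = i
  · subst hki
    by_cases hj : blk j = k <;> simp [blockProj_apply, hj]
  · by_cases hj : blk j = k <;> simp [blockProj_apply, hj, hki]

theorem blockProj_eq_self {i : Fin N} {s : En n} (hs : ∀ j, blk j ≠ i → s j = 0) :
    blockProj blk i s = s := by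
  ext j
  by_cases hj : blk j = i
  · simp [blockProj_apply, hj]
  · simp [blockProj_apply, hj, hs j hj]

theorem inner_blockProj_left (i : Fin N) (y s : En n) :
    ⟪blockProj blk i y, s⟫ = ⟪y, blockProj blk i s⟫ := by
  simp only [PiLp.inner_apply, RCLike.inner_apply, conj_trivial, blockProj_apply]
  refine sum_congr rfl fun j _ => ?_
  split_ifs <;> simp

theorem sum_blockProj (y : En n) : ∑ i, blockProj blk i y = y := by
  ext j
  rw [WithLp.ofLp_sum, Finset.sum_apply]
  simp [blockProj_apply]

theorem le_add_inner_add_sq_of_blockLipschitz {f : En n → ℝ} {g : En n → En n} {L : ℝ}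
    {i : Fin N} {x s : En n} (hg : ∀ y, HasGradientAt f (g y) y)
    (hlip : ∀ s : En n, (∀ j, blk j ≠ i → s j = 0) →
      ‖blockProj blk i (g (x + s)) - blockProj blk i (g x)‖ ≤ L * ‖s‖)
    (hs : ∀ j, blk j ≠ i → s j = 0) :
    f (x + s) ≤ f x + ⟪g x, s⟫ + L / 2 * ‖s‖ ^ 2 := by
  refine le_add_inner_add_sq_of_inner_gradient_sub_le (fun t _ => hg _) fun t ht => ?_
  have hts : ∀ j, blk j ≠ i → (t • s) j = 0 := fun j hj => by simp [hs j hj]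
  calc ⟪g (x + t • s) - g x, s⟫
      = ⟪blockProj blk i (g (x + t • s)) - blockProj blk i (g x), s⟫ := by
        rw [← blockProj_sub, inner_blockProj_left, blockProj_eq_self blk hs]
    _ ≤ ‖blockProj blk i (g (x + t • s)) - blockProj blk i (g x)‖ * ‖s‖ :=
        real_inner_le_norm _ _
    _ ≤ L * ‖t • s‖ * ‖s‖ := by gcongr; exact hlip _ hts
    _ = L * t * ‖s‖ ^ 2 := by
        rw [norm_smul, Real.norm_of_nonneg ht.1]
        ring

theorem apply_add_blockProj_sub_apply {h : En n → ℝ} {H : Fin N → En n → ℝ}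
    (hsep : ∀ x, h x = ∑ k, H k (blockProj blk k x)) (x y : En n) (i : Fin N) :
    h (x + blockProj blk i y) - h x = H i (blockProj blk i (x + y)) - H i (blockProj blk i x) := by
  rw [hsep, hsep, ← sum_sub_distrib, sum_eq_single i]
  · rw [blockProj_add, blockProj_add, blockProj_blockProj, if_pos rfl]
  · intro k _ hki
    rw [blockProj_add, blockProj_blockProj, if_neg hki, add_zero, sub_self]
  · simp

theorem sum_apply_add_blockProj {h : En n → ℝ} {H : Fin N → En n → ℝ}
    (hsep : ∀ x, h x = ∑ k, H k (blockProj blk k x)) (x y : En n) :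
    ∑ i, h (x + blockProj blk i y) = (N - 1) * h x + h (x + y) := by
  have hblock := sum_congr rfl fun i (_ : i ∈ univ) =>
    apply_add_blockProj_sub_apply blk hsep x y i
  rw [sum_sub_distrib, sum_sub_distrib, ← hsep, ← hsep] at hblock
  simp only [sum_const, card_univ, Fintype.card_fin, nsmul_eq_mul] at hblock
  linarith

end Blocks

theorem stmt5_general {n N : ℕ} (hN : 0 < N) (blk : Fin n → Fin N)
    (L : Fin N → ℝ)
    (f h : En n → ℝ) (g : En n → En n) (hg : ∀ x, HasGradientAt f (g x) x)
    (hlip : ∀ (i : Fin N) (x s : En n), (∀ j, blk j ≠ i → s j = 0) →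
      ‖blockProj blk i (g (x + s)) - blockProj blk i (g x)‖ ≤ L i * ‖s‖)
    (H : Fin N → En n → ℝ)
    (hsep : ∀ x, h x = ∑ k, H k (blockProj blk k x))
    (x : En n) (d : Fin N → En n)
    (hdsupp : ∀ i j, blk j ≠ i → d i j = 0)
    (hdmin : ∀ (i : Fin N) (s : En n), (∀ j, blk j ≠ i → s j = 0) →
      f x + ⟪g x, d i⟫ + L i / 2 * ‖d i‖ ^ 2 + h (x + d i) ≤
      f x + ⟪g x, s⟫ + L i / 2 * ‖s‖ ^ 2 + h (x + s))
    (dL : En n) :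
    (N : ℝ)⁻¹ * ∑ i, (f (x + d i) + h (x + d i)) ≤
      (1 - 1 / N) * (f x + h x) +
      (1 / N) * (f x + ⟪g x, dL⟫ + (1 / 2) * blockNormSq blk L dL + h (x + dL)) := by
  have hstep : ∀ i, f (x + d i) + h (x + d i) ≤ f x + ⟪g x, blockProj blk i dL⟫ +
      L i / 2 * ‖blockProj blk i dL‖ ^ 2 + h (x + blockProj blk i dL) := fun i => by
    have hdescent := le_add_inner_add_sq_of_blockLipschitz blk hg (hlip i x) (hdsupp i)
    have hmin := hdmin i _ fun j => blockProj_apply_of_ne blk dL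
    linarith
  have hsum : ∑ i, (f x + ⟪g x, blockProj blk i dL⟫ + L i / 2 * ‖blockProj blk i dL‖ ^ 2 +
      h (x + blockProj blk i dL)) = N * f x + ⟪g x, dL⟫ + (1 / 2) * blockNormSq blk L dL +
      ((N - 1) * h x + h (x + dL)) := by
    have hquad : ∑ i, L i / 2 * ‖blockProj blk i dL‖ ^ 2 = (1 / 2) * blockNormSq blk L dL := by
      rw [blockNormSq, mul_sum]
      exact sum_congr rfl fun i _ => by ring
    simp only [sum_add_distrib, ← inner_sum, sum_blockProj, hquad,
      sum_apply_add_blockProj blk hsep, sum_const, card_univ, Fintype.card_fin, nsmul_eq_mul]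
  have hNpos : (0 : ℝ) < N := Nat.cast_pos.mpr hN
  calc (N : ℝ)⁻¹ * ∑ i, (f (x + d i) + h (x + d i))
      ≤ (N : ℝ)⁻¹ * (N * f x + ⟪g x, dL⟫ + (1 / 2) * blockNormSq blk L dL +
          ((N - 1) * h x + h (x + dL))) := by
        rw [← hsum]
        exact mul_le_mul_of_nonneg_left (sum_le_sum fun i _ => hstep i) (inv_nonneg.mpr hNpos.le)
    _ = _ := by field_simp; ring

/-- One step of the 1-random coordinate descent method with uniform block
selection: if `d i` (supported on block `i`) minimizes the block quadratic model
`s ↦ f(x) + ⟨∇_i f(x), s⟩ + (L_i/2)‖s‖² + h_i(x_i + s)` and `dL` minimizes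
`ψ_L(s; x) = f(x) + ⟨∇f(x), s⟩ + (1/2)‖s‖_L² + h(x+s)`, then the conditional expectation
of `F(x⁺) = F(x + U_i d_i)` over the uniformly random block `i` (which equals the average
`(1/N) ∑ i F(x + d i)`) satisfies
`E[F(x⁺) | x] ≤ (1 − 1/N) F(x) + (1/N) ψ_L(dL; x)`. -/
theorem stmt5 {n N : ℕ} (hN : 0 < N) (blk : Fin n → Fin N)
    (L : Fin N → ℝ) (hL : ∀ i, 0 < L i)
    (f h : En n → ℝ) (g : En n → En n) (hg : ∀ x, HasGradientAt f (g x) x)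
    (hlip : ∀ (i : Fin N) (x s : En n), (∀ j, blk j ≠ i → s j = 0) →
      ‖blockProj blk i (g (x + s)) - blockProj blk i (g x)‖ ≤ L i * ‖s‖)
    (H : Fin N → En n → ℝ) (hHconv : ∀ k, ConvexOn ℝ Set.univ (H k))
    (hsep : ∀ x, h x = ∑ k, H k (blockProj blk k x)) (hcont : Continuous h)
    (x : En n) (d : Fin N → En n)
    (hdsupp : ∀ i j, blk j ≠ i → d i j = 0)
    (hdmin : ∀ (i : Fin N) (s : En n), (∀ j, blk j ≠ i → s j = 0) →
      f x + ⟪g x, d i⟫ + L i / 2 * ‖d i‖ ^ 2 + h (x + d i) ≤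
      f x + ⟪g x, s⟫ + L i / 2 * ‖s‖ ^ 2 + h (x + s))
    (dL : En n)
    (hdL : ∀ s : En n,
      f x + ⟪g x, dL⟫ + (1 / 2) * blockNormSq blk L dL + h (x + dL) ≤
      f x + ⟪g x, s⟫ + (1 / 2) * blockNormSq blk L s + h (x + s)) :
    (N : ℝ)⁻¹ * ∑ i, (f (x + d i) + h (x + d i)) ≤
      (1 - 1 / N) * (f x + h x) +
      (1 / N) * (f x + ⟪g x, dL⟫ + (1 / 2) * blockNormSq blk L dL + h (x + dL)) :=
  stmt5_general hN blk L f h g hg hlip H hsep x d hdsupp hdmin dL
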